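/- The identity C₁²·C₂²·C₃ = L⁵ holds in ℂ[[x]]. -/

import Mathlib

set_option maxHeartbeats 1000000


open PowerSeries

/-- The derivation `D = x · d/dx` on `ℂ[[x]]`. -/
noncomputable def Dop (f : PowerSeries ℂ) : PowerSeries ℂ :=
  PowerSeries.X * PowerSeries.derivative ℂ f

/-- The power series `I_j = Σ_{m≥0} (−1)^m (∏_{l=0}^{m−1} (l + j/5)^5) x^{5m+j}/(5m+j)!`,
for `1 ≤ j ≤ 3`.  (The coefficient of `x^n` is nonzero only for `n ≡ j mod 5`, in which
case `n = 5m + j` with `m = (n − j)/5`.) -/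
noncomputable def Iser (j : ℕ) : PowerSeries ℂ :=
  PowerSeries.mk fun n =>
    if n % 5 = j then
      (-1 : ℂ) ^ ((n - j) / 5) *
        (∏ l ∈ Finset.range ((n - j) / 5), ((l : ℂ) + (j : ℂ) / 5) ^ 5) / (n.factorial : ℂ)
    else 0

noncomputable def Aser : PowerSeries ℂ := 1 + PowerSeries.C (1 / 5 ^ 5 : ℂ) * PowerSeries.X ^ 5

lemma coeff_Dop (n : ℕ) (f : PowerSeries ℂ) : coeff n (Dop f) = n * coeff n f := by
  cases n with
  | zero => simp [Dop]
  | succ n =>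
    rw [Dop, coeff_succ_X_mul, coeff_derivative]
    push_cast; ring

lemma Dop_mul (f g : PowerSeries ℂ) : Dop (f * g) = f * Dop g + g * Dop f := by
  rw [Dop, Derivation.leibniz, smul_eq_mul, smul_eq_mul, Dop, Dop]; ring

lemma Dop_add (f g : PowerSeries ℂ) : Dop (f + g) = Dop f + Dop g := by
  rw [Dop, map_add, mul_add, Dop, Dop]

lemma Dop_sub (f g : PowerSeries ℂ) : Dop (f - g) = Dop f - Dop g := by
  rw [Dop, map_sub, mul_sub, Dop, Dop]

lemma Dop_C (c : ℂ) : Dop (C c) = 0 := by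
  rw [Dop, derivative_C, mul_zero]

lemma Dop_ofNat (n : ℕ) [n.AtLeastTwo] : Dop (OfNat.ofNat n : PowerSeries ℂ) = 0 := by
  rw [← map_ofNat (C (R := ℂ)) n, Dop_C]

lemma Dop_Aser : Dop Aser = C 5 * Aser - C 5 := by
  ext n
  simp only [map_sub, coeff_C_mul, coeff_Dop, Aser, map_add, coeff_one, coeff_C,
    PowerSeries.coeff_X_pow]
  by_cases h0 : n = 0
  · subst h0; norm_num
  · by_cases h5 : n = 5
    · subst h5; norm_num
    · simp [h0, h5]

lemma coeff_Aser_mul (n : ℕ) (P : PowerSeries ℂ) :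
    coeff n (Aser * P) =
      coeff n P + (1 / 5 ^ 5) * (if 5 ≤ n then coeff (n - 5) P else 0) := by
  have : Aser * P = P + C (1 / 5 ^ 5 : ℂ) * (X ^ 5 * P) := by rw [Aser]; ring
  rw [this, map_add, coeff_C_mul, coeff_X_pow_mul']

lemma coeff_Iser (j n : ℕ) : coeff n (Iser j) =
    if n % 5 = j then
      (-1 : ℂ) ^ ((n - j) / 5) *
        (∏ l ∈ Finset.range ((n - j) / 5), ((l : ℂ) + (j : ℂ) / 5) ^ 5) / (n.factorial : ℂ)
    else 0 := by
  rw [Iser, coeff_mk]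

lemma Iser_rec (j k : ℕ) (hj : 1 ≤ j) (hj4 : j ≤ 4) (hmod : k % 5 = j) :
    coeff (k + 5) (Iser j) *
        (((k : ℂ) + 5) * ((k : ℂ) + 4) * ((k : ℂ) + 3) * ((k : ℂ) + 2) * ((k : ℂ) + 1))
      = -((k : ℂ) ^ 5 / 5 ^ 5) * coeff k (Iser j) := by
  rw [coeff_Iser, coeff_Iser, if_pos (show (k + 5) % 5 = j by omega), if_pos hmod]
  have hq : (k + 5 - j) / 5 = (k - j) / 5 + 1 := by omega
  have hkj : k = 5 * ((k - j) / 5) + j := by omega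
  have hkC : (k : ℂ) = 5 * (((k - j) / 5 : ℕ) : ℂ) + (j : ℂ) := by
    exact_mod_cast congrArg (Nat.cast (R := ℂ)) hkj
  rw [hq, Finset.prod_range_succ, pow_succ]
  have hfac : ((k + 5).factorial : ℂ) =
      ((k : ℂ) + 5) * ((k : ℂ) + 4) * ((k : ℂ) + 3) * ((k : ℂ) + 2) * ((k : ℂ) + 1)
        * (k.factorial : ℂ) := by
    push_cast [show k + 5 = k + 1 + 1 + 1 + 1 + 1 from rfl, Nat.factorial_succ]
    ring
  have hfk : (k.factorial : ℂ) ≠ 0 := by exact_mod_cast k.factorial_ne_zero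
  rw [hfac, hkC]
  set m := (((k - j) / 5 : ℕ) : ℂ) with hm
  set P := ∏ l ∈ Finset.range ((k - j) / 5), ((l : ℂ) + (j : ℂ) / 5) ^ 5 with hP
  set F := (k.factorial : ℂ) with hF
  set jC := (j : ℂ) with hjC
  have c1 : 5 * m + jC + 1 ≠ 0 := by
    rw [hm, hjC]; exact_mod_cast (show ((5 * ((k - j) / 5) + j + 1 : ℕ)) ≠ 0 by omega)
  have c2 : 5 * m + jC + 2 ≠ 0 := by
    rw [hm, hjC]; exact_mod_cast (show ((5 * ((k - j) / 5) + j + 2 : ℕ)) ≠ 0 by omega)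
  have c3 : 5 * m + jC + 3 ≠ 0 := by
    rw [hm, hjC]; exact_mod_cast (show ((5 * ((k - j) / 5) + j + 3 : ℕ)) ≠ 0 by omega)
  have c4 : 5 * m + jC + 4 ≠ 0 := by
    rw [hm, hjC]; exact_mod_cast (show ((5 * ((k - j) / 5) + j + 4 : ℕ)) ≠ 0 by omega)
  have c5 : 5 * m + jC + 5 ≠ 0 := by
    rw [hm, hjC]; exact_mod_cast (show ((5 * ((k - j) / 5) + j + 5 : ℕ)) ≠ 0 by omega)
  have hDEN : (5 * m + jC + 5) * (5 * m + jC + 4) * (5 * m + jC + 3) * (5 * m + jC + 2)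
      * (5 * m + jC + 1) * F ≠ 0 :=
    mul_ne_zero (mul_ne_zero (mul_ne_zero (mul_ne_zero (mul_ne_zero c5 c4) c3) c2) c1) hfk
  rw [div_mul_eq_mul_div, div_eq_iff hDEN]
  field_simp

lemma ode (j : ℕ) (hj : 1 ≤ j) (hj4 : j ≤ 4) :
    Aser * Dop (Dop (Dop (Dop (Dop (Iser j))))) =
      C 10 * Dop (Dop (Dop (Dop (Iser j)))) - C 35 * Dop (Dop (Dop (Iser j)))
        + C 50 * Dop (Dop (Iser j)) - C 24 * Dop (Iser j) := by
  ext n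
  rw [coeff_Aser_mul]
  simp only [map_sub, map_add, coeff_C_mul, coeff_Dop]
  by_cases hmod : n % 5 = j
  · by_cases h5 : 5 ≤ n
    · rw [if_pos h5]
      obtain ⟨k, rfl⟩ : ∃ k, n = k + 5 := ⟨n - 5, by omega⟩
      have hk5 : k + 5 - 5 = k := by omega
      rw [hk5]
      have hrec := Iser_rec j k hj hj4 (by omega)
      push_cast
      linear_combination hrec
    · rw [if_neg h5]
      rw [coeff_Iser]
      rw [if_pos hmod]
      have hn : n = j := by omega
      subst hn
      interval_cases n <;> norm_num [Nat.factorial]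
  · rw [coeff_Iser, if_neg hmod]
    by_cases h5 : 5 ≤ n
    · rw [if_pos h5, coeff_Iser, if_neg (show ¬((n - 5) % 5 = j) by omega)]
      ring
    · rw [if_neg h5]
      ring

/-- The symplectic-type pairing whose constancy (eigenvalue 5 for `D`) expresses
the self-duality of the quintic operator. -/
noncomputable def Spair (f g : PowerSeries ℂ) : PowerSeries ℂ :=
  Aser * (f * Dop (Dop (Dop g)) - g * Dop (Dop (Dop f))
      - Dop f * Dop (Dop g) + Dop g * Dop (Dop f))
    - C 5 * (f * Dop (Dop g) - g * Dop (Dop f))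
    + C 10 * (f * Dop g - g * Dop f)

lemma Dop_Spair (f g : PowerSeries ℂ)
    (hf : Aser * Dop (Dop (Dop (Dop f))) =
      C 10 * Dop (Dop (Dop f)) - C 35 * Dop (Dop f) + C 50 * Dop f - C 24 * f)
    (hg : Aser * Dop (Dop (Dop (Dop g))) =
      C 10 * Dop (Dop (Dop g)) - C 35 * Dop (Dop g) + C 50 * Dop g - C 24 * g) :
    Dop (Spair f g) = C 5 * Spair f g := by
  have hA := Dop_Aser
  simp only [Spair, Dop_add, Dop_sub, Dop_mul, Dop_C] at hA hf hg ⊢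
  simp only [map_ofNat, mul_zero, zero_mul, add_zero, zero_add] at hA hf hg ⊢
  linear_combination f * hg - g * hf +
    (f * Dop (Dop (Dop g)) - g * Dop (Dop (Dop f))
      - Dop f * Dop (Dop g) + Dop g * Dop (Dop f)) * hA

lemma eigen5 (V : PowerSeries ℂ) (h : Dop V = C 5 * V) :
    V = C (coeff 5 V) * X ^ 5 := by
  ext n
  have h' := congrArg (coeff n) h
  rw [coeff_Dop, coeff_C_mul] at h'
  rw [coeff_C_mul, PowerSeries.coeff_X_pow]
  by_cases hn : n = 5
  · subst hn; simp
  · have hz : ((n : ℂ) - 5) * coeff n V = 0 := by linear_combination h'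
    rcases mul_eq_zero.mp hz with h0 | h0
    · exfalso
      apply hn
      have : (n : ℂ) = 5 := by linear_combination h0
      exact_mod_cast this
    · simp [hn, h0]

lemma coeff0_mul (f g : PowerSeries ℂ) :
    coeff 0 (f * g) = coeff 0 f * coeff 0 g := by
  simp [coeff_zero_eq_constantCoeff, map_mul]

lemma coeff5_mul (f g : PowerSeries ℂ) : coeff 5 (f * g) =
    coeff 0 f * coeff 5 g + coeff 1 f * coeff 4 g + coeff 2 f * coeff 3 g +
    coeff 3 f * coeff 2 g + coeff 4 f * coeff 1 g + coeff 5 f * coeff 0 g := by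
  rw [coeff_mul, Finset.Nat.sum_antidiagonal_eq_sum_range_succ_mk]
  simp [Finset.sum_range_succ]

lemma coeff5_S12 : coeff 5 (Spair (Dop (Iser 1)) (Dop (Iser 2))) = 0 := by
  norm_num [Spair, Aser, coeff5_mul, coeff0_mul, coeff_Dop, coeff_Iser, coeff_C_mul,
    PowerSeries.coeff_C, PowerSeries.coeff_one, PowerSeries.coeff_X_pow, map_add, map_sub,
    Nat.factorial]

lemma coeff5_S13 : coeff 5 (Spair (Dop (Iser 1)) (Dop (Iser 3))) = 0 := by
  norm_num [Spair, Aser, coeff5_mul, coeff0_mul, coeff_Dop, coeff_Iser, coeff_C_mul,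
    PowerSeries.coeff_C, PowerSeries.coeff_one, PowerSeries.coeff_X_pow, map_add, map_sub,
    Nat.factorial]

lemma coeff5_S23 : coeff 5 (Spair (Dop (Iser 2)) (Dop (Iser 3))) = -1 := by
  norm_num [Spair, Aser, coeff5_mul, coeff0_mul, coeff_Dop, coeff_Iser, coeff_C_mul,
    PowerSeries.coeff_C, PowerSeries.coeff_one, PowerSeries.coeff_X_pow, map_add, map_sub,
    Nat.factorial]

lemma Spair_12 : Spair (Dop (Iser 1)) (Dop (Iser 2)) = 0 := by
  have h := eigen5 _ (Dop_Spair _ _ (ode 1 (by norm_num) (by norm_num))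
    (ode 2 (by norm_num) (by norm_num)))
  rw [coeff5_S12] at h
  simpa using h

lemma Spair_13 : Spair (Dop (Iser 1)) (Dop (Iser 3)) = 0 := by
  have h := eigen5 _ (Dop_Spair _ _ (ode 1 (by norm_num) (by norm_num))
    (ode 3 (by norm_num) (by norm_num)))
  rw [coeff5_S13] at h
  simpa using h

lemma Spair_23 : Spair (Dop (Iser 2)) (Dop (Iser 3)) = -(X ^ 5) := by
  have h := eigen5 _ (Dop_Spair _ _ (ode 2 (by norm_num) (by norm_num))
    (ode 3 (by norm_num) (by norm_num)))
  rw [coeff5_S23] at h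
  rw [h, map_neg, map_one]
  ring

/-- The key self-duality consequence: `A · Wr₃(z₁,z₂,z₃) = X⁵ · z₁`. -/
lemma Aser_M : Aser *
    (Dop (Iser 1) * (Dop (Dop (Iser 2)) * Dop (Dop (Dop (Iser 3)))
        - Dop (Dop (Iser 3)) * Dop (Dop (Dop (Iser 2))))
      - Dop (Iser 2) * (Dop (Dop (Iser 1)) * Dop (Dop (Dop (Iser 3)))
        - Dop (Dop (Iser 3)) * Dop (Dop (Dop (Iser 1))))
      + Dop (Iser 3) * (Dop (Dop (Iser 1)) * Dop (Dop (Dop (Iser 2)))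
        - Dop (Dop (Iser 2)) * Dop (Dop (Dop (Iser 1)))))
    = X ^ 5 * Dop (Iser 1) := by
  have s12 := Spair_12
  have s13 := Spair_13
  have s23 := Spair_23
  simp only [Spair] at s12 s13 s23
  linear_combination (-(Dop (Iser 1))) * s23 + Dop (Iser 2) * s13 - Dop (Iser 3) * s12

/-- The identity `C₁²·C₂²·C₃ = L⁵` holds in `ℂ[[x]]`, where `C₁ = D I₁`, `C₂ = D g₂`,
`C₃ = D g₃` with `g₂·C₁ = D I₂`, `h·C₁ = D I₃`, `g₃·C₂ = D h`. -/
theorem stmt3 (L g₂ h g₃ : PowerSeries ℂ)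
    (hL0 : PowerSeries.constantCoeff L = 0)
    (hL1 : PowerSeries.coeff 1 L = 1)
    (hLeq : L ^ 5 * (1 + PowerSeries.C (1 / 5 ^ 5 : ℂ) * PowerSeries.X ^ 5)
      = PowerSeries.X ^ 5)
    (hg₂ : g₂ * Dop (Iser 1) = Dop (Iser 2))
    (hh : h * Dop (Iser 1) = Dop (Iser 3))
    (hg₃ : g₃ * Dop g₂ = Dop h) :
    (Dop (Iser 1)) ^ 2 * (Dop g₂) ^ 2 * (Dop g₃) = L ^ 5 := by
  set z1 := Dop (Iser 1) with hz1d
  set z2 := Dop (Iser 2) with hz2d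
  set z3 := Dop (Iser 3) with hz3d
  have hz1 : z1 ≠ 0 := by
    intro h0
    have h1 := congrArg (coeff 1) h0
    rw [hz1d, coeff_Dop, coeff_Iser] at h1
    norm_num [Nat.factorial] at h1
  have hAne : Aser ≠ 0 := by
    intro h0
    have h1 := congrArg (coeff 0) h0
    simp [Aser, PowerSeries.coeff_one, coeff_C_mul, PowerSeries.coeff_X_pow] at h1
  have t1 := congrArg Dop hg₂
  have t2 := congrArg Dop hh
  have t3 := congrArg Dop hg₃
  simp only [Dop_mul] at t1 t2 t3
  have A1 : Dop g₂ * (z1 * z1) = z1 * Dop z2 - z2 * Dop z1 := by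
    linear_combination z1 * t1 - Dop z1 * hg₂
  have A2 : Dop h * (z1 * z1) = z1 * Dop z3 - z3 * Dop z1 := by
    linear_combination z1 * t2 - Dop z1 * hh
  have u1 := congrArg Dop A1
  have u2 := congrArg Dop A2
  simp only [Dop_mul, Dop_sub] at u1 u2
  have A3 : Dop (Dop g₂) * (z1 * z1 * z1 * z1) =
      (z1 * z1) * (z1 * Dop (Dop z2) - z2 * Dop (Dop z1))
        - 2 * (z1 * Dop z2 - z2 * Dop z1) * z1 * Dop z1 := by
    linear_combination (z1 * z1) * u1 - 2 * z1 * Dop z1 * A1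
  have A4 : Dop (Dop h) * (z1 * z1 * z1 * z1) =
      (z1 * z1) * (z1 * Dop (Dop z3) - z3 * Dop (Dop z1))
        - 2 * (z1 * Dop z3 - z3 * Dop z1) * z1 * Dop z1 := by
    linear_combination (z1 * z1) * u2 - 2 * z1 * Dop z1 * A2
  have B1 : Dop g₃ * (Dop g₂ * Dop g₂) * (z1 * z1 * z1 * z1 * z1 * z1) =
      (z1 * z1 * z1) *
        (z1 * (Dop z2 * Dop (Dop z3) - Dop z3 * Dop (Dop z2))
          - z2 * (Dop z1 * Dop (Dop z3) - Dop z3 * Dop (Dop z1))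
          + z3 * (Dop z1 * Dop (Dop z2) - Dop z2 * Dop (Dop z1))) := by
    linear_combination (Dop g₂ * z1 ^ 6) * t3 + (Dop g₂ * z1 ^ 2) * A4
      + ((z1 * z1) * (z1 * Dop (Dop z3) - z3 * Dop (Dop z1))
          - 2 * (z1 * Dop z3 - z3 * Dop z1) * z1 * Dop z1) * A1
      - (Dop (Dop g₂) * z1 ^ 6) * hg₃ - (Dop h * z1 ^ 2) * A3
      - ((z1 * z1) * (z1 * Dop (Dop z2) - z2 * Dop (Dop z1))
          - 2 * (z1 * Dop z2 - z2 * Dop z1) * z1 * Dop z1) * A2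
  have hAM : Aser *
      (z1 * (Dop z2 * Dop (Dop z3) - Dop z3 * Dop (Dop z2))
        - z2 * (Dop z1 * Dop (Dop z3) - Dop z3 * Dop (Dop z1))
        + z3 * (Dop z1 * Dop (Dop z2) - Dop z2 * Dop (Dop z1)))
      = X ^ 5 * z1 := by
    rw [hz1d, hz2d, hz3d]
    exact Aser_M
  have hLeq' : L ^ 5 * Aser = X ^ 5 := hLeq
  have key : (z1 ^ 2 * Dop g₂ ^ 2 * Dop g₃) * (Aser * z1 ^ 4) = L ^ 5 * (Aser * z1 ^ 4) := by
    linear_combination Aser * B1 + (z1 * z1 * z1) * hAM - z1 ^ 4 * hLeq'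
  exact mul_right_cancel₀ (mul_ne_zero hAne (pow_ne_zero 4 hz1)) key
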